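/- arXiv:2307.15267 — 2 statements merged into one kernel-verified Lean document; each statement's English description precedes it below -/
import Mathlib

section
/- Let Q be the quadratic null form Q_{\mu\nu}(\partial\phi,\partial\psi) = \partial_\mu\phi\,\partial_\nu\psi - \partial_\nu\phi\,\partial_\mu\psi on \mathbb{R}^{1+3}. Then for smooth functions \phi,\psi and all (t,x) with t>|x|, one has |Q_{\mu\nu}(\partial\phi,\partial\psi)| \le C( |\underline{\partial}\phi||\partial\psi| + |\partial\phi||\underline{\partial}\psi| + \frac{t^2-r^2}{t^2}|\partial\phi||\partial\psi| ), where \underline{\partial}_a = \partial_a + (x_a/t)\partial_t are the hyperboloidal tangent derivatives, \partial denotes any coordinate derivative, and r=|x|. -/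
open Real MeasureTheory

namespace Stmt0

/-- Coordinate partial derivative on `ℝ^{1+3}` (coordinate `0` is `t`, `1,2,3` are `x`). -/
noncomputable def pd (i : Fin 4) (u : (Fin 4 → ℝ) → ℝ) (p : Fin 4 → ℝ) : ℝ :=
  fderiv ℝ u p (Pi.single i 1)

/-- Spatial index embedding. -/
def sp : Fin 3 → Fin 4 := Fin.succ

/-- `r = |x|`. -/
noncomputable def rad (p : Fin 4 → ℝ) : ℝ :=
  Real.sqrt (∑ j : Fin 3, (p (sp j)) ^ 2)

/-- Hyperboloidal tangential derivative `∂̲_a = ∂_a + (x_a/t)∂_t`. -/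
noncomputable def ud (a : Fin 3) (u : (Fin 4 → ℝ) → ℝ) (p : Fin 4 → ℝ) : ℝ :=
  pd (sp a) u p + (p (sp a) / p 0) * pd 0 u p

/-- `|∂u|` : maximum of all coordinate derivatives. -/
noncomputable def Dfull (u : (Fin 4 → ℝ) → ℝ) (p : Fin 4 → ℝ) : ℝ :=
  max |pd 0 u p| (max |pd 1 u p| (max |pd 2 u p| |pd 3 u p|))

/-- `|∂̲u|` : maximum of the hyperboloidal tangential derivatives. -/
noncomputable def Dund (u : (Fin 4 → ℝ) → ℝ) (p : Fin 4 → ℝ) : ℝ :=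
  max |ud 0 u p| (max |ud 1 u p| |ud 2 u p|)

private lemma bound_ts (ca ua va f0 g0 U V F G : ℝ)
    (hua : |ua| ≤ U) (hva : |va| ≤ V) (hf0 : |f0| ≤ F) (hg0 : |g0| ≤ G) :
    |f0 * (va - ca * g0) - (ua - ca * f0) * g0| ≤ 10 * (U * G + F * V) := by
  have hU : 0 ≤ U := (abs_nonneg _).trans hua
  have hF : 0 ≤ F := (abs_nonneg _).trans hf0
  have e : f0 * (va - ca * g0) - (ua - ca * f0) * g0 = f0 * va - ua * g0 := by ring
  rw [e]
  have h1 : |f0 * va| ≤ F * V := by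
    rw [abs_mul]; exact mul_le_mul hf0 hva (abs_nonneg _) hF
  have h2 : |ua * g0| ≤ U * G := by
    rw [abs_mul]; exact mul_le_mul hua hg0 (abs_nonneg _) hU
  have h3 := abs_sub (f0 * va) (ua * g0)
  have hUG : 0 ≤ U * G := le_trans (abs_nonneg _) h2
  have hFV : 0 ≤ F * V := le_trans (abs_nonneg _) h1
  linarith

private lemma bound_ss (ca cb ua ub va vb f0 g0 U V F G : ℝ)
    (hca : |ca| ≤ 1) (hcb : |cb| ≤ 1)
    (hua : |ua| ≤ U) (hub : |ub| ≤ U)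
    (hvaV : |va| ≤ V) (hvbV : |vb| ≤ V)
    (hva2 : |va| ≤ 2 * G) (hvb2 : |vb| ≤ 2 * G)
    (hf0 : |f0| ≤ F) (hg0 : |g0| ≤ G) :
    |(ua - ca * f0) * (vb - cb * g0) - (ub - cb * f0) * (va - ca * g0)| ≤
      10 * (U * G + F * V) := by
  have hU : 0 ≤ U := (abs_nonneg _).trans hua
  have hF : 0 ≤ F := (abs_nonneg _).trans hf0
  have hG : 0 ≤ G := (abs_nonneg _).trans hg0
  have hV : 0 ≤ V := (abs_nonneg _).trans hvaV
  have e : (ua - ca * f0) * (vb - cb * g0) - (ub - cb * f0) * (va - ca * g0)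
      = (ua * vb - ub * va) + ((ca * (ub * g0) - cb * (ua * g0)) +
        (cb * (f0 * va) - ca * (f0 * vb))) := by ring
  rw [e]
  have h1 : |ua * vb| ≤ U * (2 * G) := by
    rw [abs_mul]; exact mul_le_mul hua hvb2 (abs_nonneg _) hU
  have h2 : |ub * va| ≤ U * (2 * G) := by
    rw [abs_mul]; exact mul_le_mul hub hva2 (abs_nonneg _) hU
  have hubg : |ub * g0| ≤ U * G := by
    rw [abs_mul]; exact mul_le_mul hub hg0 (abs_nonneg _) hU
  have huag : |ua * g0| ≤ U * G := by
    rw [abs_mul]; exact mul_le_mul hua hg0 (abs_nonneg _) hU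
  have hfva : |f0 * va| ≤ F * V := by
    rw [abs_mul]; exact mul_le_mul hf0 hvaV (abs_nonneg _) hF
  have hfvb : |f0 * vb| ≤ F * V := by
    rw [abs_mul]; exact mul_le_mul hf0 hvbV (abs_nonneg _) hF
  have hUG : 0 ≤ U * G := mul_nonneg hU hG
  have hFV : 0 ≤ F * V := mul_nonneg hF hV
  have h3 : |ca * (ub * g0)| ≤ 1 * (U * G) := by
    rw [abs_mul]; exact mul_le_mul hca hubg (abs_nonneg _) zero_le_one
  have h4 : |cb * (ua * g0)| ≤ 1 * (U * G) := by
    rw [abs_mul]; exact mul_le_mul hcb huag (abs_nonneg _) zero_le_one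
  have h5 : |cb * (f0 * va)| ≤ 1 * (F * V) := by
    rw [abs_mul]; exact mul_le_mul hcb hfva (abs_nonneg _) zero_le_one
  have h6 : |ca * (f0 * vb)| ≤ 1 * (F * V) := by
    rw [abs_mul]; exact mul_le_mul hca hfvb (abs_nonneg _) zero_le_one
  have t1 := abs_add_le (ua * vb - ub * va)
    ((ca * (ub * g0) - cb * (ua * g0)) + (cb * (f0 * va) - ca * (f0 * vb)))
  have t2 := abs_add_le (ca * (ub * g0) - cb * (ua * g0)) (cb * (f0 * va) - ca * (f0 * vb))
  have s1 := abs_sub (ua * vb) (ub * va)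
  have s2 := abs_sub (ca * (ub * g0)) (cb * (ua * g0))
  have s3 := abs_sub (cb * (f0 * va)) (ca * (f0 * vb))
  linarith

/-- Estimate for the quadratic null forms `Q_{μν}` inside the light cone. -/
theorem null_form_estimate :
    ∃ C : ℝ, 0 < C ∧ ∀ (φ ψ : (Fin 4 → ℝ) → ℝ), ContDiff ℝ (⊤ : ℕ∞) φ → ContDiff ℝ (⊤ : ℕ∞) ψ →
      ∀ p : Fin 4 → ℝ, rad p < p 0 → ∀ μ ν : Fin 4,
        |pd μ φ p * pd ν ψ p - pd ν φ p * pd μ ψ p| ≤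
          C * (Dund φ p * Dfull ψ p + Dfull φ p * Dund ψ p +
            ((p 0) ^ 2 - (rad p) ^ 2) / (p 0) ^ 2 * (Dfull φ p * Dfull ψ p)) := by
  refine ⟨10, by norm_num, ?_⟩
  intro φ ψ hφ hψ p hp μ ν
  have hr0 : 0 ≤ rad p := Real.sqrt_nonneg _
  have ht : 0 < p 0 := lt_of_le_of_lt hr0 hp
  have hxa : ∀ a : Fin 3, |p (sp a)| ≤ rad p := by
    intro a
    have h1 : (p (sp a)) ^ 2 ≤ ∑ j : Fin 3, (p (sp j)) ^ 2 :=
      Finset.single_le_sum (f := fun j => (p (sp j)) ^ 2) (fun j _ => sq_nonneg _)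
        (Finset.mem_univ a)
    calc |p (sp a)| = Real.sqrt ((p (sp a)) ^ 2) := (Real.sqrt_sq_eq_abs _).symm
      _ ≤ rad p := Real.sqrt_le_sqrt h1
  have hc : ∀ a : Fin 3, |p (sp a) / p 0| ≤ 1 := by
    intro a
    rw [abs_div, abs_of_pos ht, div_le_one ht]
    exact (hxa a).trans hp.le
  have hpdid : ∀ (u : (Fin 4 → ℝ) → ℝ) (a : Fin 3),
      pd (sp a) u p = ud a u p - (p (sp a) / p 0) * pd 0 u p := by
    intro u a; simp only [ud]; ring
  have hDf0 : ∀ u : (Fin 4 → ℝ) → ℝ, |pd 0 u p| ≤ Dfull u p := fun u => le_max_left _ _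
  have hDf1 : ∀ u : (Fin 4 → ℝ) → ℝ, |pd 1 u p| ≤ Dfull u p :=
    fun u => le_trans (le_max_left _ _) (le_max_right _ _)
  have hDf2 : ∀ u : (Fin 4 → ℝ) → ℝ, |pd 2 u p| ≤ Dfull u p :=
    fun u => le_trans (le_trans (le_max_left _ _) (le_max_right _ _)) (le_max_right _ _)
  have hDf3 : ∀ u : (Fin 4 → ℝ) → ℝ, |pd 3 u p| ≤ Dfull u p :=
    fun u => le_trans (le_trans (le_max_right _ _) (le_max_right _ _)) (le_max_right _ _)
  have hDfsp : ∀ (u : (Fin 4 → ℝ) → ℝ) (a : Fin 3), |pd (sp a) u p| ≤ Dfull u p := by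
    intro u a
    fin_cases a
    · exact hDf1 u
    · exact hDf2 u
    · exact hDf3 u
  have hDu : ∀ (u : (Fin 4 → ℝ) → ℝ) (a : Fin 3), |ud a u p| ≤ Dund u p := by
    intro u a
    fin_cases a
    · exact le_max_left _ _
    · exact le_trans (le_max_left _ _) (le_max_right _ _)
    · exact le_trans (le_max_right _ _) (le_max_right _ _)
  have hDu2 : ∀ (u : (Fin 4 → ℝ) → ℝ) (a : Fin 3), |ud a u p| ≤ 2 * Dfull u p := by
    intro u a
    have e : ud a u p = pd (sp a) u p + (p (sp a) / p 0) * pd 0 u p := rfl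
    rw [e]
    calc |pd (sp a) u p + (p (sp a) / p 0) * pd 0 u p|
        ≤ |pd (sp a) u p| + |p (sp a) / p 0| * |pd 0 u p| := by
          rw [← abs_mul]; exact abs_add_le _ _
      _ ≤ Dfull u p + 1 * Dfull u p :=
          add_le_add (hDfsp u a)
            (mul_le_mul (hc a) (hDf0 u) (abs_nonneg _) zero_le_one)
      _ = 2 * Dfull u p := by ring
  have hFφ : 0 ≤ Dfull φ p := (abs_nonneg _).trans (hDf0 φ)
  have hFψ : 0 ≤ Dfull ψ p := (abs_nonneg _).trans (hDf0 ψ)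
  have hUφ : 0 ≤ Dund φ p := (abs_nonneg _).trans (hDu φ 0)
  have hUψ : 0 ≤ Dund ψ p := (abs_nonneg _).trans (hDu ψ 0)
  have hT : 0 ≤ ((p 0) ^ 2 - (rad p) ^ 2) / (p 0) ^ 2 * (Dfull φ p * Dfull ψ p) :=
    mul_nonneg (div_nonneg (sub_nonneg.2 (pow_le_pow_left₀ hr0 hp.le 2)) (sq_nonneg _))
      (mul_nonneg hFφ hFψ)
  set S := Dund φ p * Dfull ψ p + Dfull φ p * Dund ψ p with hS
  suffices h : |pd μ φ p * pd ν ψ p - pd ν φ p * pd μ ψ p| ≤ 10 * S by linarith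
  have key0 : ∀ a : Fin 3,
      |pd 0 φ p * pd (sp a) ψ p - pd (sp a) φ p * pd 0 ψ p| ≤ 10 * S := by
    intro a
    rw [hpdid ψ a, hpdid φ a]
    exact bound_ts _ _ _ _ _ _ _ _ _ (hDu φ a) (hDu ψ a) (hDf0 φ) (hDf0 ψ)
  have keySym : ∀ a : Fin 3,
      |pd (sp a) φ p * pd 0 ψ p - pd 0 φ p * pd (sp a) ψ p| ≤ 10 * S := by
    intro a; rw [abs_sub_comm]; exact key0 a
  have keySS : ∀ a b : Fin 3,
      |pd (sp a) φ p * pd (sp b) ψ p - pd (sp b) φ p * pd (sp a) ψ p| ≤ 10 * S := by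
    intro a b
    rw [hpdid φ a, hpdid φ b, hpdid ψ a, hpdid ψ b]
    exact bound_ss _ _ _ _ _ _ _ _ _ _ _ _ (hc a) (hc b) (hDu φ a) (hDu φ b)
      (hDu ψ a) (hDu ψ b) (hDu2 ψ a) (hDu2 ψ b) (hDf0 φ) (hDf0 ψ)
  have keyDiag : ∀ κ : Fin 4,
      |pd κ φ p * pd κ ψ p - pd κ φ p * pd κ ψ p| ≤ 10 * S := by
    intro κ
    simp only [sub_self, abs_zero]
    have : 0 ≤ S := add_nonneg (mul_nonneg hUφ hFψ) (mul_nonneg hFφ hUψ)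
    linarith
  fin_cases μ <;> fin_cases ν
  · exact keyDiag 0
  · exact key0 0
  · exact key0 1
  · exact key0 2
  · exact keySym 0
  · exact keyDiag 1
  · exact keySS 0 1
  · exact keySS 0 2
  · exact keySym 1
  · exact keySS 1 0
  · exact keyDiag 2
  · exact keySS 1 2
  · exact keySym 2
  · exact keySS 2 0
  · exact keySS 2 1
  · exact keyDiag 3

end Stmt0
end

section
/- (Hardy inequality on truncated hyperboloids) Let s>0, r_s = \max\{r : t^2-|x|^2=s^2, t\ge 1+\sqrt{1+|x|^2}\text{ admits }|x|=r\} and t_s=\sqrt{s^2+r_s^2}. For any smooth function u(t,x) on \mathbb{R}^{1+3} decaying at spatial infinity, \| r^{-1} u \|_{L^2(\mathcal{H}_s)} \le C( \|\underline{\partial} u\|_{L^2(\mathcal{H}_s)} + \|\partial u(t_s,\cdot)\|_{L^2(\{|x|\ge r_s\})} ), where \mathcal{H}_s=\{t^2-|x|^2=s^2, t\ge |x|+1\} is parametrized by x and the L^2 norms are with respect to dx. -/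
open Real MeasureTheory

namespace Stmt5

open Set Metric intervalIntegral
open scoped ENNReal

/-- Time derivative `∂_t u`. -/
noncomputable def pdT (u : ℝ × EuclideanSpace ℝ (Fin 3) → ℝ)
    (p : ℝ × EuclideanSpace ℝ (Fin 3)) : ℝ :=
  fderiv ℝ u p (1, 0)

/-- Spatial derivative `∂_a u`. -/
noncomputable def pdX (a : Fin 3) (u : ℝ × EuclideanSpace ℝ (Fin 3) → ℝ)
    (p : ℝ × EuclideanSpace ℝ (Fin 3)) : ℝ :=
  fderiv ℝ u p (0, EuclideanSpace.single a 1)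

/-- Hyperboloidal tangential derivative `∂̲_a = ∂_a + (x_a/t)∂_t`. -/
noncomputable def udH (a : Fin 3) (u : ℝ × EuclideanSpace ℝ (Fin 3) → ℝ)
    (p : ℝ × EuclideanSpace ℝ (Fin 3)) : ℝ :=
  pdX a u p + (p.2 a / p.1) * pdT u p

/-- `r_s`: the largest radius on the truncated hyperboloid
`{t² - |x|² = s², t ≥ 1 + √(1+|x|²)}`. -/
noncomputable def rs (s : ℝ) : ℝ :=
  sSup {r : ℝ | 1 + Real.sqrt (1 + r ^ 2) ≤ Real.sqrt (s ^ 2 + r ^ 2)}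

/-- `t_s = √(s² + r_s²)`. -/
noncomputable def ts (s : ℝ) : ℝ := Real.sqrt (s ^ 2 + rs s ^ 2)


noncomputable abbrev E3 := EuclideanSpace ℝ (Fin 3)

lemma lintegral_polar (f : E3 → ℝ≥0∞) (hf : Measurable f) :
    ∫⁻ x, f x = ∫⁻ ω, (∫⁻ r in Set.Ioi (0:ℝ),
      ENNReal.ofReal (r ^ 2) * f (r • (ω : E3))) ∂(volume : Measure E3).toSphere := by
  have hdim : Module.finrank ℝ E3 = 3 := by simp [finrank_euclideanSpace]
  have hmp := Measure.measurePreserving_homeomorphUnitSphereProd (volume : Measure E3)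
  rw [hdim] at hmp
  have hg : Measurable (fun p : sphere (0:E3) 1 × Ioi (0:ℝ) => f ((p.2 : ℝ) • (p.1 : E3))) := by
    apply hf.comp
    fun_prop
  have h1 : ∫⁻ p : sphere (0:E3) 1 × Ioi (0:ℝ),
      f ((p.2 : ℝ) • (p.1 : E3)) ∂((volume : Measure E3).toSphere.prod (.volumeIoiPow (3-1)))
      = ∫⁻ x, f x := by
    rw [← hmp.lintegral_comp hg]
    have : ∀ x : ({0}ᶜ : Set E3),
        f (((homeomorphUnitSphereProd E3 x).2 : ℝ) • ((homeomorphUnitSphereProd E3 x).1 : E3)) = f x := by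
      intro x
      congr 1
      simp [smul_inv_smul₀ (norm_ne_zero_iff.2 x.2)]
    simp_rw [this]
    rw [lintegral_subtype_comap (measurableSet_singleton (0:E3)).compl]
    rw [restrict_compl_singleton]
  rw [← h1, lintegral_prod _ hg.aemeasurable]
  refine lintegral_congr fun ω => ?_
  rw [Measure.volumeIoiPow, lintegral_withDensity_eq_lintegral_mul _ (by fun_prop) (by fun_prop)]
  simp only [Pi.mul_apply]
  rw [show (fun a : Ioi (0:ℝ) => ENNReal.ofReal ((a:ℝ) ^ (3-1)) * f ((a:ℝ) • (ω:E3)))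
      = fun a : Ioi (0:ℝ) => (fun r : ℝ => ENNReal.ofReal (r ^ 2) * f (r • (ω:E3))) (a:ℝ) from rfl]
  simpa using lintegral_subtype_comap (measurableSet_Ioi : MeasurableSet (Ioi (0:ℝ))) (fun r : ℝ => ENNReal.ofReal (r ^ 2) * f (r • (ω:E3)))



lemma hardy_ray {R M : ℝ} (hR : 0 ≤ R) (hRM : R ≤ M)
    {G₁ G₂ d₁ d₂ : ℝ → ℝ}
    (hG₁ : ∀ r, HasDerivAt G₁ (d₁ r) r) (hG₂ : ∀ r, HasDerivAt G₂ (d₂ r) r)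
    (hd₁ : Continuous d₁) (hd₂ : Continuous d₂)
    (hmatch : G₁ R = G₂ R) (hM : G₂ M = 0) :
    (∫ r in (0:ℝ)..R, (G₁ r)^2) + (∫ r in R..M, (G₂ r)^2)
      ≤ 4 * ((∫ r in (0:ℝ)..R, r^2 * (d₁ r)^2) + (∫ r in R..M, r^2 * (d₂ r)^2)) := by
  have hG₁c : Continuous G₁ := continuous_iff_continuousAt.2 fun r => (hG₁ r).continuousAt
  have hG₂c : Continuous G₂ := continuous_iff_continuousAt.2 fun r => (hG₂ r).continuousAt
  have P₁ : ∀ r : ℝ, HasDerivAt (fun y => y * G₁ y ^ 2)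
      (G₁ r ^ 2 + r * (2 * G₁ r ^ 1 * d₁ r)) r := fun r => by
    simpa using (hasDerivAt_id' r).fun_mul ((hG₁ r).fun_pow 2)
  have P₂ : ∀ r : ℝ, HasDerivAt (fun y => y * G₂ y ^ 2)
      (G₂ r ^ 2 + r * (2 * G₂ r ^ 1 * d₂ r)) r := fun r => by
    simpa using (hasDerivAt_id' r).fun_mul ((hG₂ r).fun_pow 2)
  have int₁ : IntervalIntegrable (fun r => G₁ r ^ 2) volume 0 R :=
    (hG₁c.pow 2).intervalIntegrable _ _
  have int₂ : IntervalIntegrable (fun r => G₂ r ^ 2) volume R M :=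
    (hG₂c.pow 2).intervalIntegrable _ _
  have int₃ : IntervalIntegrable (fun r => r * (2 * G₁ r ^ 1 * d₁ r)) volume 0 R := by
    apply Continuous.intervalIntegrable; fun_prop
  have int₄ : IntervalIntegrable (fun r => r * (2 * G₂ r ^ 1 * d₂ r)) volume R M := by
    apply Continuous.intervalIntegrable; fun_prop
  have intJ₁ : IntervalIntegrable (fun r => r ^ 2 * d₁ r ^ 2) volume 0 R := by
    apply Continuous.intervalIntegrable; fun_prop
  have intJ₂ : IntervalIntegrable (fun r => r ^ 2 * d₂ r ^ 2) volume R M := by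
    apply Continuous.intervalIntegrable; fun_prop
  have eq₁ : (∫ r in (0:ℝ)..R, (G₁ r ^ 2 + r * (2 * G₁ r ^ 1 * d₁ r)))
      = R * G₁ R ^ 2 - 0 * G₁ 0 ^ 2 :=
    integral_eq_sub_of_hasDerivAt (fun r _ => P₁ r) (int₁.add int₃)
  have eq₂ : (∫ r in R..M, (G₂ r ^ 2 + r * (2 * G₂ r ^ 1 * d₂ r)))
      = M * G₂ M ^ 2 - R * G₂ R ^ 2 :=
    integral_eq_sub_of_hasDerivAt (fun r _ => P₂ r) (int₂.add int₄)
  rw [integral_add int₁ int₃] at eq₁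
  rw [integral_add int₂ int₄] at eq₂
  have key : (∫ r in (0:ℝ)..R, G₁ r ^ 2) + (∫ r in R..M, G₂ r ^ 2)
      = -((∫ r in (0:ℝ)..R, r * (2 * G₁ r ^ 1 * d₁ r)) + (∫ r in R..M, r * (2 * G₂ r ^ 1 * d₂ r))) := by
    rw [hM] at eq₂; rw [hmatch] at eq₁; linarith
  -- pointwise bound: -(r * (2 * G r * d r)) ≤ (1/2) * G r ^2 + 2 * r^2 * d r^2
  have bnd₁ : (∫ r in (0:ℝ)..R, -(r * (2 * G₁ r ^ 1 * d₁ r)))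
      ≤ ∫ r in (0:ℝ)..R, ((1/2) * G₁ r ^ 2 + 2 * (r ^ 2 * d₁ r ^ 2)) := by
    apply integral_mono_on hR (int₃.neg) ((int₁.const_mul _).add (intJ₁.const_mul _))
    intro r _; simp only [Pi.neg_apply]; nlinarith [sq_nonneg (G₁ r + 2 * r * d₁ r)]
  have bnd₂ : (∫ r in R..M, -(r * (2 * G₂ r ^ 1 * d₂ r)))
      ≤ ∫ r in R..M, ((1/2) * G₂ r ^ 2 + 2 * (r ^ 2 * d₂ r ^ 2)) := by
    apply integral_mono_on hRM (int₄.neg) ((int₂.const_mul _).add (intJ₂.const_mul _))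
    intro r _; simp only [Pi.neg_apply]; nlinarith [sq_nonneg (G₂ r + 2 * r * d₂ r)]
  rw [intervalIntegral.integral_neg] at bnd₁ bnd₂
  rw [integral_add (int₁.const_mul _) (intJ₁.const_mul _), intervalIntegral.integral_const_mul, intervalIntegral.integral_const_mul] at bnd₁
  rw [integral_add (int₂.const_mul _) (intJ₂.const_mul _), intervalIntegral.integral_const_mul, intervalIntegral.integral_const_mul] at bnd₂
  linarith



variable {u : ℝ × E3 → ℝ}

lemma pair_decomp (a : ℝ) (y : E3) :
    ((a, y) : ℝ × E3) = a • ((1:ℝ), (0:E3)) + ∑ i, y i • (((0:ℝ), EuclideanSpace.single i (1:ℝ))) := by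
  refine Prod.ext ?_ ?_
  · simp [Prod.fst_sum]
  · refine PiLp.ext fun j => ?_
    simp [Prod.snd_sum, Finset.sum_apply, EuclideanSpace.single_apply, PiLp.smul_apply]
    simp [Pi.single_apply]

lemma fderiv_pair (hu : Differentiable ℝ u) (p : ℝ × E3) (a : ℝ) (y : E3) :
    fderiv ℝ u p (a, y) = a * pdT u p + ∑ i, y i * pdX i u p := by
  rw [pair_decomp a y, map_add, _root_.map_smul, map_sum]
  simp only [pdT, pdX, smul_eq_mul]
  congr 1
  refine Finset.sum_congr rfl fun i _ => ?_
  rw [_root_.map_smul]; rfl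



section
variable (u)

lemma hasDerivAt_T {s : ℝ} (hs : 0 < s) (r : ℝ) :
    HasDerivAt (fun r : ℝ => Real.sqrt (s^2 + r^2)) (r / Real.sqrt (s^2 + r^2)) r := by
  have h0 : s^2 + r^2 ≠ 0 := by positivity
  have h1 : HasDerivAt (fun r : ℝ => s^2 + r^2) (2*r) r := by
    simpa using ((hasDerivAt_pow 2 r).const_add (s^2))
  have h2 := h1.sqrt h0
  convert h2 using 1
  have h3 : Real.sqrt (s^2+r^2) > 0 := Real.sqrt_pos.2 (by positivity)
  field_simp

/-- derivative of `r ↦ u (√(s²+r²), r•ω)` -/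
lemma hasDerivAt_G1 (hu : Differentiable ℝ u) (hs : 0 < s) (ω : E3) (r : ℝ) :
    HasDerivAt (fun r : ℝ => u (Real.sqrt (s^2 + r^2), r • ω))
      ((r / Real.sqrt (s^2 + r^2)) * pdT u (Real.sqrt (s^2 + r^2), r • ω)
        + ∑ i, ω i * pdX i u (Real.sqrt (s^2 + r^2), r • ω)) r := by
  have hφ : HasDerivAt (fun r : ℝ => ((Real.sqrt (s^2 + r^2), r • ω) : ℝ × E3))
      ((r / Real.sqrt (s^2 + r^2), ω)) r := by
    refine (hasDerivAt_T hs r).prodMk ?_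
    simpa using (hasDerivAt_id r).smul_const ω
  have := (hu _).hasFDerivAt.comp_hasDerivAt r hφ
  rw [fderiv_pair hu _ _ _] at this
  exact this

/-- derivative of `r ↦ u (c, r•ω)` -/
lemma hasDerivAt_G2 (hu : Differentiable ℝ u) (c : ℝ) (ω : E3) (r : ℝ) :
    HasDerivAt (fun r : ℝ => u (c, r • ω)) (∑ i, ω i * pdX i u (c, r • ω)) r := by
  have hφ : HasDerivAt (fun r : ℝ => ((c, r • ω) : ℝ × E3)) (((0:ℝ), ω)) r := by
    refine (hasDerivAt_const r c).prodMk ?_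
    simpa using (hasDerivAt_id r).smul_const ω
  have := (hu _).hasFDerivAt.comp_hasDerivAt r hφ
  rw [fderiv_pair hu _ _ _] at this
  simpa [Function.comp_def] using this



end

lemma continuous_pdT (hu : ContDiff ℝ (⊤ : ℕ∞) u) : Continuous (pdT u) :=
  (hu.continuous_fderiv (by simp)).clm_apply continuous_const

lemma continuous_pdX (hu : ContDiff ℝ (⊤ : ℕ∞) u) (i : Fin 3) : Continuous (pdX i u) :=
  (hu.continuous_fderiv (by simp)).clm_apply continuous_const

lemma continuous_sqrtsq {s : ℝ} : Continuous fun r : ℝ => Real.sqrt (s^2 + r^2) :=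
  Real.continuous_sqrt.comp (continuous_const.add (continuous_pow 2))

lemma sqrtsq_pos {s : ℝ} (hs : 0 < s) (r : ℝ) : 0 < Real.sqrt (s^2 + r^2) :=
  Real.sqrt_pos.2 (by positivity)

lemma sum_sq_eq_one {ω : E3} (hω : ‖ω‖ = 1) : ∑ i, ω i ^ 2 = 1 := by
  have h := EuclideanSpace.norm_eq ω
  rw [hω] at h
  have h2 : ∑ i, ω i ^ 2 = ∑ i, ‖ω i‖ ^ 2 := by
    refine Finset.sum_congr rfl fun i _ => ?_
    rw [Real.norm_eq_abs, sq_abs]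
  rw [h2]
  nlinarith [Real.sq_sqrt (show (0:ℝ) ≤ ∑ i, ‖ω i‖ ^ 2 by positivity), h.symm]

lemma sum_udH_eq {ω : E3} (hω : ‖ω‖ = 1) (u : ℝ × E3 → ℝ) (t r : ℝ) :
    ∑ i, ω i * udH i u (t, r • ω)
      = (r / t) * pdT u (t, r • ω) + ∑ i, ω i * pdX i u (t, r • ω) := by
  simp only [udH]
  have key : ∀ i : Fin 3,
      ω i * (pdX i u (t, r • ω) + (((t, r • ω) : ℝ × E3).2 i / t) * pdT u (t, r • ω))
      = ω i * pdX i u (t, r • ω) + ω i ^ 2 * ((r / t) * pdT u (t, r • ω)) := fun i => by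
    have h2 : ((t, r • ω) : ℝ × E3).2 i = r * ω i := by
      simp [PiLp.smul_apply, smul_eq_mul]
    rw [h2]; ring
  rw [Finset.sum_congr rfl fun i _ => key i, Finset.sum_add_distrib, ← Finset.sum_mul,
    sum_sq_eq_one hω, one_mul]
  ring

lemma sq_sum_le {ω : E3} (hω : ‖ω‖ = 1) (a : Fin 3 → ℝ) :
    (∑ i, ω i * a i) ^ 2 ≤ ∑ i, a i ^ 2 := by
  have h := Finset.sum_mul_sq_le_sq_mul_sq Finset.univ ω a
  rwa [sum_sq_eq_one hω, one_mul] at h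



open scoped ENNReal

lemma ray_ineq {s R T M : ℝ} (hs : 0 < s) (hR : 0 ≤ R) (hRM : R ≤ M)
    (hT : T = Real.sqrt (s^2 + R^2))
    {u : ℝ × E3 → ℝ} (hu : ContDiff ℝ (⊤ : ℕ∞) u)
    (hM : ∀ t : ℝ, ∀ x : E3, M ≤ ‖x‖ → u (t, x) = 0)
    {ω : E3} (hω : ‖ω‖ = 1)
    (w Q : E3 → ℝ)
    (hw : ∀ x, w x = if ‖x‖ ≤ R then u (Real.sqrt (s^2 + ‖x‖^2), x) else u (T, x))
    (hQ : ∀ x, Q x = if ‖x‖ ≤ R then ∑ a, (udH a u (Real.sqrt (s^2+‖x‖^2), x))^2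
        else (pdT u (T,x))^2 + ∑ a, (pdX a u (T,x))^2) :
    ∫⁻ r in Set.Ioi (0:ℝ), ENNReal.ofReal (r^2) * ENNReal.ofReal (w (r • ω)^2 / ‖r • ω‖^2)
      ≤ 4 * ∫⁻ r in Set.Ioi (0:ℝ), ENNReal.ofReal (r^2) * ENNReal.ofReal (Q (r • ω)) := by
  have hudiff : Differentiable ℝ u := hu.differentiable (by simp)
  have hnorm : ∀ r : ℝ, 0 ≤ r → ‖r • ω‖ = r := fun r hr => by
    rw [norm_smul, hω, Real.norm_eq_abs, abs_of_nonneg hr, mul_one]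
  set G₁ : ℝ → ℝ := fun r => u (Real.sqrt (s^2 + r^2), r • ω) with hG₁def
  set G₂ : ℝ → ℝ := fun r => u (T, r • ω) with hG₂def
  set d₁ : ℝ → ℝ := fun r => (r / Real.sqrt (s^2 + r^2)) * pdT u (Real.sqrt (s^2+r^2), r • ω)
      + ∑ i, ω i * pdX i u (Real.sqrt (s^2+r^2), r • ω) with hd₁def
  set d₂ : ℝ → ℝ := fun r => ∑ i, ω i * pdX i u (T, r • ω) with hd₂def
  have hG₁ : ∀ r, HasDerivAt G₁ (d₁ r) r := fun r => hasDerivAt_G1 u hudiff hs ω r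
  have hG₂ : ∀ r, HasDerivAt G₂ (d₂ r) r := fun r => hasDerivAt_G2 u hudiff T ω r
  have hpath : Continuous fun r : ℝ => ((Real.sqrt (s^2+r^2), r • ω) : ℝ × E3) :=
    continuous_sqrtsq.prodMk (continuous_id.smul continuous_const)
  have hpath₂ : Continuous fun r : ℝ => ((T, r • ω) : ℝ × E3) :=
    continuous_const.prodMk (continuous_id.smul continuous_const)
  have hd₁ : Continuous d₁ := by
    refine Continuous.add ?_ ?_
    · exact (continuous_id.div continuous_sqrtsq fun r => (sqrtsq_pos hs r).ne').mul
        ((continuous_pdT hu).comp hpath)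
    · exact continuous_finset_sum _ fun i _ =>
        continuous_const.mul ((continuous_pdX hu i).comp hpath)
  have hd₂ : Continuous d₂ := continuous_finset_sum _ fun i _ =>
    continuous_const.mul ((continuous_pdX hu i).comp hpath₂)
  have hG₁c : Continuous G₁ := continuous_iff_continuousAt.2 fun r => (hG₁ r).continuousAt
  have hG₂c : Continuous G₂ := continuous_iff_continuousAt.2 fun r => (hG₂ r).continuousAt
  have hmatch : G₁ R = G₂ R := by rw [hG₁def, hG₂def]; simp [hT]
  have hG₂M : G₂ M = 0 := hM T (M • ω) (by rw [hnorm M (hR.trans hRM)])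
  have key := hardy_ray hR hRM hG₁ hG₂ hd₁ hd₂ hmatch hG₂M
  set I₁ := ∫ r in (0:ℝ)..R, (G₁ r)^2 with hI₁def
  set I₂ := ∫ r in R..M, (G₂ r)^2 with hI₂def
  set J₁ := ∫ r in (0:ℝ)..R, r^2*(d₁ r)^2 with hJ₁def
  set J₂ := ∫ r in R..M, r^2*(d₂ r)^2 with hJ₂def
  have hI₁0 : 0 ≤ I₁ := intervalIntegral.integral_nonneg hR fun r _ => sq_nonneg _
  have hI₂0 : 0 ≤ I₂ := intervalIntegral.integral_nonneg hRM fun r _ => sq_nonneg _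
  have hJ₁0 : 0 ≤ J₁ := intervalIntegral.integral_nonneg hR fun r _ => by positivity
  have hJ₂0 : 0 ≤ J₂ := intervalIntegral.integral_nonneg hRM fun r _ => by positivity
  have hdecomp : ∀ f : ℝ → ℝ≥0∞, ∫⁻ r in Set.Ioi (0:ℝ), f r
      = (∫⁻ r in Set.Ioc 0 R, f r) + ((∫⁻ r in Set.Ioc R M, f r) + (∫⁻ r in Set.Ioi M, f r)) := by
    intro f
    rw [← Set.Ioc_union_Ioi_eq_Ioi hR,
      lintegral_union measurableSet_Ioi (Set.Ioc_disjoint_Ioi le_rfl),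
      ← Set.Ioc_union_Ioi_eq_Ioi hRM,
      lintegral_union measurableSet_Ioi (Set.Ioc_disjoint_Ioi le_rfl)]
  -- LHS pieces
  have e1 : ∫⁻ r in Set.Ioc 0 R, ENNReal.ofReal (r^2) * ENNReal.ofReal (w (r • ω)^2/‖r • ω‖^2)
      = ENNReal.ofReal I₁ := by
    have c1 : ∀ r ∈ Set.Ioc (0:ℝ) R, ENNReal.ofReal (r^2) * ENNReal.ofReal (w (r • ω)^2/‖r • ω‖^2)
        = ENNReal.ofReal ((G₁ r)^2) := by
      intro r hr
      have hrne : r ≠ 0 := ne_of_gt hr.1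
      rw [hw, hnorm r hr.1.le, if_pos hr.2, ← ENNReal.ofReal_mul (by positivity)]
      congr 1
      rw [hG₁def]
      field_simp
    rw [setLIntegral_congr_fun measurableSet_Ioc c1,
      ← ofReal_integral_eq_lintegral_ofReal
        (((by fun_prop : Continuous fun r => G₁ r ^ 2).integrableOn_Icc).mono_set Set.Ioc_subset_Icc_self)
        (Filter.Eventually.of_forall fun r => sq_nonneg _),
      hI₁def, intervalIntegral.integral_of_le hR]
  have e2 : ∫⁻ r in Set.Ioc R M, ENNReal.ofReal (r^2) * ENNReal.ofReal (w (r • ω)^2/‖r • ω‖^2)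
      ≤ ENNReal.ofReal I₂ := by
    have c2 : ∀ r ∈ Set.Ioc R M, ENNReal.ofReal (r^2) * ENNReal.ofReal (w (r • ω)^2/‖r • ω‖^2)
        ≤ ENNReal.ofReal ((G₂ r)^2) := by
      intro r hr
      have hr0 : (0:ℝ) < r := hR.trans_lt hr.1
      rcases le_or_gt (‖r • ω‖) R with hc | hc
      · -- can't happen since ‖r•ω‖ = r > R
        exact absurd (hnorm r hr0.le ▸ hc) (not_le.2 hr.1)
      · rw [hw, if_neg (not_le.2 hc), hnorm r hr0.le, ← ENNReal.ofReal_mul (by positivity)]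
        apply ENNReal.ofReal_le_ofReal
        rw [hG₂def]
        rw [div_eq_mul_inv]
        have : r ^ 2 * (u (T, r • ω) ^ 2 * (r^2)⁻¹) = u (T, r • ω)^2 := by field_simp
        rw [this]
    calc ∫⁻ r in Set.Ioc R M, ENNReal.ofReal (r^2) * ENNReal.ofReal (w (r • ω)^2/‖r • ω‖^2)
        ≤ ∫⁻ r in Set.Ioc R M, ENNReal.ofReal ((G₂ r)^2) :=
          lintegral_mono_ae ((ae_restrict_iff' measurableSet_Ioc).2 (Filter.Eventually.of_forall c2))
      _ = ENNReal.ofReal I₂ := by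
          rw [← ofReal_integral_eq_lintegral_ofReal
            (((by fun_prop : Continuous fun r => G₂ r ^ 2).integrableOn_Icc).mono_set Set.Ioc_subset_Icc_self)
            (Filter.Eventually.of_forall fun r => sq_nonneg _),
            hI₂def, intervalIntegral.integral_of_le hRM]
  have e3 : ∫⁻ r in Set.Ioi M, ENNReal.ofReal (r^2) * ENNReal.ofReal (w (r • ω)^2/‖r • ω‖^2)
      = 0 := by
    have c3 : ∀ r ∈ Set.Ioi M, ENNReal.ofReal (r^2) * ENNReal.ofReal (w (r • ω)^2/‖r • ω‖^2)
        = 0 := by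
      intro r hr
      have hr0 : (0:ℝ) ≤ r := (hR.trans hRM).trans hr.out.le
      have hn := hnorm r hr0
      have hwz : w (r • ω) = 0 := by
        rw [hw, hn, if_neg (not_le.2 ((lt_of_le_of_lt hRM hr.out)))]
        refine hM T _ ?_
        rw [hn]
        exact hr.out.le
      rw [hwz]
      simp
    rw [setLIntegral_congr_fun measurableSet_Ioi c3, lintegral_zero]
  -- RHS pieces
  have f1 : ENNReal.ofReal J₁
      ≤ ∫⁻ r in Set.Ioc 0 R, ENNReal.ofReal (r^2) * ENNReal.ofReal (Q (r • ω)) := by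
    have c1 : ∀ r ∈ Set.Ioc (0:ℝ) R, ENNReal.ofReal (r^2 * (d₁ r)^2)
        ≤ ENNReal.ofReal (r^2) * ENNReal.ofReal (Q (r • ω)) := by
      intro r hr
      rw [ENNReal.ofReal_mul (sq_nonneg r)]
      refine mul_le_mul_right (ENNReal.ofReal_le_ofReal ?_) _
      rw [hQ, hnorm r hr.1.le, if_pos hr.2]
      have hd : d₁ r = ∑ i, ω i * udH i u (Real.sqrt (s^2+r^2), r • ω) := by
        rw [hd₁def, sum_udH_eq hω u (Real.sqrt (s^2+r^2)) r]
      rw [hd]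
      exact sq_sum_le hω _
    calc ENNReal.ofReal J₁
        = ∫⁻ r in Set.Ioc 0 R, ENNReal.ofReal (r^2 * (d₁ r)^2) := by
          rw [hJ₁def, intervalIntegral.integral_of_le hR,
            ofReal_integral_eq_lintegral_ofReal
              ((Continuous.integrableOn_Icc (by fun_prop)).mono_set Set.Ioc_subset_Icc_self)
              (Filter.Eventually.of_forall fun r => by positivity)]
      _ ≤ _ := lintegral_mono_ae ((ae_restrict_iff' measurableSet_Ioc).2 (Filter.Eventually.of_forall c1))
  have f2 : ENNReal.ofReal J₂
      ≤ ∫⁻ r in Set.Ioc R M, ENNReal.ofReal (r^2) * ENNReal.ofReal (Q (r • ω)) := by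
    have c2 : ∀ r ∈ Set.Ioc R M, ENNReal.ofReal (r^2 * (d₂ r)^2)
        ≤ ENNReal.ofReal (r^2) * ENNReal.ofReal (Q (r • ω)) := by
      intro r hr
      have hr0 : (0:ℝ) < r := hR.trans_lt hr.1
      rw [ENNReal.ofReal_mul (sq_nonneg r)]
      refine mul_le_mul_right (ENNReal.ofReal_le_ofReal ?_) _
      rw [hQ, hnorm r hr0.le, if_neg (not_le.2 hr.1)]
      have h1 : (d₂ r)^2 ≤ ∑ a, (pdX a u (T, r • ω))^2 := by
        rw [hd₂def]; exact sq_sum_le hω _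
      nlinarith [sq_nonneg (pdT u (T, r • ω))]
    calc ENNReal.ofReal J₂
        = ∫⁻ r in Set.Ioc R M, ENNReal.ofReal (r^2 * (d₂ r)^2) := by
          rw [hJ₂def, intervalIntegral.integral_of_le hRM,
            ofReal_integral_eq_lintegral_ofReal
              ((Continuous.integrableOn_Icc (by fun_prop)).mono_set Set.Ioc_subset_Icc_self)
              (Filter.Eventually.of_forall fun r => by positivity)]
      _ ≤ _ := lintegral_mono_ae ((ae_restrict_iff' measurableSet_Ioc).2 (Filter.Eventually.of_forall c2))
  calc ∫⁻ r in Set.Ioi (0:ℝ), ENNReal.ofReal (r^2) * ENNReal.ofReal (w (r • ω)^2/‖r • ω‖^2)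
      ≤ ENNReal.ofReal I₁ + (ENNReal.ofReal I₂ + 0) := by
        rw [hdecomp, e1, e3]
        exact add_le_add_right (add_le_add_left e2 0) _
    _ = ENNReal.ofReal (I₁ + I₂) := by rw [add_zero, ENNReal.ofReal_add hI₁0 hI₂0]
    _ ≤ ENNReal.ofReal (4*(J₁+J₂)) := ENNReal.ofReal_le_ofReal key
    _ = 4 * (ENNReal.ofReal J₁ + ENNReal.ofReal J₂) := by
        rw [ENNReal.ofReal_mul (by norm_num : (0:ℝ) ≤ 4), ENNReal.ofReal_add hJ₁0 hJ₂0]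
        norm_num
    _ ≤ 4 * ∫⁻ r in Set.Ioi (0:ℝ), ENNReal.ofReal (r^2) * ENNReal.ofReal (Q (r • ω)) := by
        refine mul_le_mul_right ?_ _
        rw [hdecomp]
        exact add_le_add f1 (f2.trans le_self_add)





lemma rs_nonneg (s : ℝ) : 0 ≤ rs s := by
  set S := {r : ℝ | 1 + Real.sqrt (1 + r ^ 2) ≤ Real.sqrt (s ^ 2 + r ^ 2)} with hSdef
  have hbdd : BddAbove S := by
    refine ⟨s^2/2, fun r hr => ?_⟩
    have h1 : (0:ℝ) ≤ 1 + Real.sqrt (1 + r^2) := by positivity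
    have h2 : (1 + Real.sqrt (1 + r^2))^2 ≤ (Real.sqrt (s^2 + r^2))^2 :=
      pow_le_pow_left₀ h1 hr 2
    rw [Real.sq_sqrt (by positivity)] at h2
    have h3 : Real.sqrt (1 + r^2)^2 = 1 + r^2 := Real.sq_sqrt (by positivity)
    have h4 : r ≤ Real.sqrt (1 + r^2) := by
      calc r ≤ |r| := le_abs_self r
        _ = Real.sqrt (r^2) := (Real.sqrt_sq_eq_abs r).symm
        _ ≤ Real.sqrt (1 + r^2) := Real.sqrt_le_sqrt (by linarith)
    nlinarith [Real.sqrt_nonneg (1 + r^2)]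
  rcases Set.eq_empty_or_nonempty S with h | ⟨r, hr⟩
  · rw [rs, ← hSdef, h, Real.sSup_empty]
  · have habs : |r| ∈ S := by
      have : |r|^2 = r^2 := sq_abs r
      simpa [hSdef, this] using hr
    exact (abs_nonneg r).trans (le_csSup hbdd habs)





/-- Hardy inequality on truncated hyperboloids. -/
theorem hardy_on_truncated_hyperboloids :
    ∃ C : ℝ, 0 < C ∧ ∀ s : ℝ, 0 < s → ∀ u : ℝ × EuclideanSpace ℝ (Fin 3) → ℝ,
      ContDiff ℝ (⊤ : ℕ∞) u → HasCompactSupport u →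
      Real.sqrt (∫ x in {x : EuclideanSpace ℝ (Fin 3) | ‖x‖ ≤ rs s},
          (u (Real.sqrt (s ^ 2 + ‖x‖ ^ 2), x)) ^ 2 / ‖x‖ ^ 2) ≤
        C * (Real.sqrt (∫ x in {x : EuclideanSpace ℝ (Fin 3) | ‖x‖ ≤ rs s},
              ∑ a : Fin 3, (udH a u (Real.sqrt (s ^ 2 + ‖x‖ ^ 2), x)) ^ 2)
          + Real.sqrt (∫ x in {x : EuclideanSpace ℝ (Fin 3) | rs s ≤ ‖x‖},
              (pdT u (ts s, x)) ^ 2 + ∑ a : Fin 3, (pdX a u (ts s, x)) ^ 2)) := by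

  refine ⟨2, two_pos, fun s hs u hu hsupp => ?_⟩
  set R := rs s with hRdef
  have hR : 0 ≤ R := rs_nonneg s
  have hT : ts s = Real.sqrt (s^2 + R^2) := rfl
  obtain ⟨M₀, hM₀⟩ := hsupp.isBounded.subset_closedBall (0 : ℝ × E3)
  set M := max R M₀ + 1 with hMdef
  have hRM : R ≤ M := (le_max_left _ _).trans (le_of_lt (lt_add_one _))
  have hM : ∀ t : ℝ, ∀ x : E3, M ≤ ‖x‖ → u (t, x) = 0 := by
    intro t x hx
    by_contra h
    have h1 : (t,x) ∈ tsupport u := subset_tsupport u h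
    have h2 : ‖((t,x) : ℝ × E3)‖ ≤ M₀ := by
      simpa [mem_closedBall_zero_iff] using hM₀ h1
    have h3 : ‖x‖ ≤ M₀ := le_trans (norm_snd_le ((t,x) : ℝ × E3)) h2
    have h4 : M₀ < M := (le_max_right R M₀).trans_lt (lt_add_one _)
    linarith
  -- functions
  set v := fun x : E3 => u (Real.sqrt (s^2 + ‖x‖^2), x) with hvdef
  set qA := fun x : E3 => ∑ a, (udH a u (Real.sqrt (s^2+‖x‖^2), x))^2 with hqAdef
  set qB := fun x : E3 => (pdT u (ts s, x))^2 + ∑ a, (pdX a u (ts s, x))^2 with hqBdef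
  set w := fun x : E3 => if ‖x‖ ≤ R then u (Real.sqrt (s^2 + ‖x‖^2), x) else u (ts s, x) with hwdef
  set Qf := fun x : E3 => if ‖x‖ ≤ R then qA x else qB x with hQdef
  -- continuity
  have hsqc : Continuous fun x : E3 => Real.sqrt (s^2 + ‖x‖^2) :=
    Real.continuous_sqrt.comp (continuous_const.add (continuous_norm.pow 2))
  have hpathx : Continuous fun x : E3 => ((Real.sqrt (s^2+‖x‖^2), x) : ℝ × E3) :=
    hsqc.prodMk continuous_id
  have hpathT : Continuous fun x : E3 => ((ts s, x) : ℝ × E3) :=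
    continuous_const.prodMk continuous_id
  have hv : Continuous v := hu.continuous.comp hpathx
  have hsne : ∀ x : E3, Real.sqrt (s^2 + ‖x‖^2) ≠ 0 := fun x =>
    (Real.sqrt_pos.2 (by positivity)).ne'
  have hudHc : ∀ a : Fin 3, Continuous fun x : E3 => udH a u (Real.sqrt (s^2+‖x‖^2), x) := by
    intro a
    simp only [udH]
    exact ((continuous_pdX hu a).comp hpathx).add
      ((((EuclideanSpace.proj a : E3 →L[ℝ] ℝ).continuous.div hsqc hsne)).mul
        ((continuous_pdT hu).comp hpathx))
  have hqA : Continuous qA := continuous_finset_sum _ fun a _ => (hudHc a).pow 2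
  have hqB : Continuous qB :=
    (((continuous_pdT hu).comp hpathT).pow 2).add
      (continuous_finset_sum _ fun a _ => ((continuous_pdX hu a).comp hpathT).pow 2)
  have hSmeas : MeasurableSet {x : E3 | ‖x‖ ≤ R} :=
    measurableSet_le continuous_norm.measurable measurable_const
  have hwmeas : Measurable w :=
    Measurable.ite hSmeas hv.measurable (hu.continuous.comp hpathT).measurable
  have hQmeas : Measurable Qf := Measurable.ite hSmeas hqA.measurable hqB.measurable
  -- lintegral quantities
  set Lℒ := ∫⁻ x in {x : E3 | ‖x‖ ≤ R},
      ENNReal.ofReal ((u (Real.sqrt (s ^ 2 + ‖x‖ ^ 2), x)) ^ 2 / ‖x‖ ^ 2) with hLl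
  set Aℒ := ∫⁻ x in {x : E3 | ‖x‖ ≤ R}, ENNReal.ofReal (qA x) with hAl
  set Bℒ := ∫⁻ x in {x : E3 | R ≤ ‖x‖}, ENNReal.ofReal (qB x) with hBl
  have hmeasL : Measurable fun x : E3 => (u (Real.sqrt (s ^ 2 + ‖x‖ ^ 2), x)) ^ 2 / ‖x‖ ^ 2 :=
    (hv.measurable.pow_const 2).div (continuous_norm.measurable.pow_const 2)
  have hLr : (∫ x in {x : E3 | ‖x‖ ≤ R}, (u (Real.sqrt (s ^ 2 + ‖x‖ ^ 2), x)) ^ 2 / ‖x‖ ^ 2)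
      = Lℒ.toReal := by
    rw [hLl, integral_eq_lintegral_of_nonneg_ae
      (Filter.Eventually.of_forall fun x => by positivity) hmeasL.aestronglyMeasurable]
  have hAr : (∫ x in {x : E3 | ‖x‖ ≤ R}, qA x) = Aℒ.toReal := by
    rw [hAl, integral_eq_lintegral_of_nonneg_ae
      (Filter.Eventually.of_forall fun x => by positivity) hqA.measurable.aestronglyMeasurable]
  have hBr : (∫ x in {x : E3 | R ≤ ‖x‖}, qB x) = Bℒ.toReal := by
    rw [hBl, integral_eq_lintegral_of_nonneg_ae
      (Filter.Eventually.of_forall fun x => by positivity) hqB.measurable.aestronglyMeasurable]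
  -- finiteness
  have hSball : {x : E3 | ‖x‖ ≤ R} = Metric.closedBall (0:E3) R := by
    ext x; simp [mem_closedBall_zero_iff]
  have hAfin : Aℒ ≠ ⊤ := by
    have hint : IntegrableOn qA {x : E3 | ‖x‖ ≤ R} := by
      rw [hSball]
      exact hqA.continuousOn.integrableOn_compact (isCompact_closedBall _ _)
    exact hint.lintegral_lt_top.ne
  have hBfin : Bℒ ≠ ⊤ := by
    have hcs : HasCompactSupport qB := by
      apply HasCompactSupport.intro (isCompact_closedBall (0:E3) M₀)
      intro x hx
      have hxn : M₀ < ‖x‖ := by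
        simp only [Metric.mem_closedBall, dist_zero_right, not_le] at hx
        exact hx
      have hnm : (ts s, x) ∉ tsupport u := by
        intro hmem
        have h5 : ‖((ts s, x) : ℝ × E3)‖ ≤ M₀ := by
          simpa [mem_closedBall_zero_iff] using hM₀ hmem
        have h6 : ‖x‖ ≤ M₀ := le_trans (norm_snd_le ((ts s, x) : ℝ × E3)) h5
        linarith
      have hfz : fderiv ℝ u (ts s, x) = 0 := by
        by_contra hne
        exact hnm (support_fderiv_subset (𝕜 := ℝ) (f := u) (by simpa [Function.mem_support] using hne))
      rw [hqBdef]
      simp [pdT, pdX, hfz]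
    have hint : Integrable qB := hqB.integrable_of_hasCompactSupport hcs
    exact ((setLIntegral_le_lintegral _ _).trans_lt hint.lintegral_lt_top).ne
  -- core chain
  have hwf : Measurable fun x : E3 => ENNReal.ofReal (w x ^ 2 / ‖x‖ ^ 2) :=
    ((hwmeas.pow_const 2).div (continuous_norm.measurable.pow_const 2)).ennreal_ofReal
  have hQl : Measurable fun x : E3 => ENNReal.ofReal (Qf x) := hQmeas.ennreal_ofReal
  have step1 : Lℒ ≤ ∫⁻ x, ENNReal.ofReal (w x ^ 2 / ‖x‖ ^ 2) := by
    rw [hLl]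
    refine le_trans (le_of_eq (setLIntegral_congr_fun hSmeas
      (fun x hx => ?_))) (setLIntegral_le_lintegral _ _)
    rw [hwdef]
    simp only
    rw [if_pos (show ‖x‖ ≤ R from hx)]
  have step2 : (∫⁻ x, ENNReal.ofReal (w x ^ 2 / ‖x‖ ^ 2)) ≤ 4 * ∫⁻ x, ENNReal.ofReal (Qf x) := by
    rw [lintegral_polar _ hwf, lintegral_polar _ hQl, ← lintegral_const_mul' 4 _ (by norm_num)]
    refine lintegral_mono fun ω => ?_
    exact ray_ineq hs hR hRM hT hu hM (mem_sphere_zero_iff_norm.1 ω.2) w Qf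
      (fun x => rfl) (fun x => rfl)
  have step3 : (∫⁻ x, ENNReal.ofReal (Qf x)) ≤ Aℒ + Bℒ := by
    rw [← lintegral_add_compl (fun x => ENNReal.ofReal (Qf x)) hSmeas]
    refine add_le_add ?_ ?_
    · refine le_of_eq (setLIntegral_congr_fun hSmeas
        (fun x hx => ?_))
      rw [hQdef]
      simp only
      rw [if_pos (show ‖x‖ ≤ R from hx)]
    · refine le_trans (le_of_eq (setLIntegral_congr_fun hSmeas.compl
        (fun x hx => ?_))) (lintegral_mono_set ?_)
      · rw [hQdef]
        simp only
        rw [if_neg (show ¬ ‖x‖ ≤ R from hx)]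
      · intro x hx
        exact le_of_lt (not_le.1 (show ¬ ‖x‖ ≤ R from hx))
  have hcore : Lℒ ≤ 4 * (Aℒ + Bℒ) := step1.trans (step2.trans (mul_le_mul_right step3 4))
  have h4fin : (4 : ℝ≥0∞) * (Aℒ + Bℒ) ≠ ⊤ :=
    ENNReal.mul_ne_top (by norm_num) (ENNReal.add_ne_top.2 ⟨hAfin, hBfin⟩)
  have hLle : Lℒ.toReal ≤ 4 * (Aℒ.toReal + Bℒ.toReal) := by
    have h7 := ENNReal.toReal_mono h4fin hcore
    rwa [ENNReal.toReal_mul, ENNReal.toReal_add hAfin hBfin, ENNReal.toReal_ofNat] at h7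
  rw [hLr, hAr, hBr]
  have ha : 0 ≤ Aℒ.toReal := ENNReal.toReal_nonneg
  have hb : 0 ≤ Bℒ.toReal := ENNReal.toReal_nonneg
  have h1 : Lℒ.toReal ≤ (2 * (Real.sqrt Aℒ.toReal + Real.sqrt Bℒ.toReal)) ^ 2 := by
    nlinarith [Real.sq_sqrt ha, Real.sq_sqrt hb, Real.sqrt_nonneg Aℒ.toReal,
      Real.sqrt_nonneg Bℒ.toReal]
  calc Real.sqrt Lℒ.toReal
      ≤ Real.sqrt ((2 * (Real.sqrt Aℒ.toReal + Real.sqrt Bℒ.toReal)) ^ 2) := Real.sqrt_le_sqrt h1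
    _ = 2 * (Real.sqrt Aℒ.toReal + Real.sqrt Bℒ.toReal) := Real.sqrt_sq (by positivity)

end Stmt5
end
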